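/- arXiv:1405.4170 — 6 statements merged into one kernel-verified Lean document; each statement's English description precedes it below -/
import Mathlib

section
/- Let $c$ be a $d\times d$ real symmetric matrix. Then the matrix equation $2\,\mathrm{tr}(x)\,x + 4x^2 = c^2$ admits exactly one solution $x$ in the set of symmetric nonnegative-definite $d\times d$ matrices. -/
/-!
Put `s = tr x / 2`. The equation reads `4 s x + 4 x² = c²`, i.e. `(2x + s)² = c² + s²`, so for
`x ≥ 0` it forces `2x + s = √(c² + s²)`, that is `x = r_s(c)` with `r_s(t) = (√(t² + s²) - s) / 2`.
Taking traces, `s` must solve the scalar equation `(4 + d) s = ∑ᵢ √(λᵢ² + s²)` over the eigenvalues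
`λᵢ` of `c`. Since `s ↦ √(λ² + s²)` is `1`-Lipschitz, `(4 + d) s - ∑ᵢ √(λᵢ² + s²)` is strictly
increasing on `[0, ∞)`; it is `≤ 0` at `0` and grows at least linearly, so it has exactly one
nonnegative zero `s`, and `r_s(c)` is the unique solution.
-/

open Finset
open scoped MatrixOrder

lemma Real.sqrt_add_sq_le_sqrt_add_sq_add {μ a b : ℝ} (hμ : 0 ≤ μ) (ha : 0 ≤ a) (hab : a ≤ b) :
    √(μ + b ^ 2) ≤ √(μ + a ^ 2) + (b - a) := by
  have ha' : a ≤ √(μ + a ^ 2) := Real.le_sqrt_of_sq_le (by linarith)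
  refine Real.sqrt_le_iff.mpr ⟨by linarith, ?_⟩
  nlinarith [Real.sq_sqrt (by positivity : 0 ≤ μ + a ^ 2)]

section ScalarFixedPoint

variable {ι : Type*} [Fintype ι] (ev : ι → ℝ) {k : ℝ}

lemma sub_mul_le_sub_sum_sqrt {a b : ℝ} (ha : 0 ≤ a) (hab : a ≤ b) :
    (k - Fintype.card ι) * (b - a) ≤
      (k * b - ∑ i, √(ev i ^ 2 + b ^ 2)) - (k * a - ∑ i, √(ev i ^ 2 + a ^ 2)) := by
  have hsum : ∑ i, √(ev i ^ 2 + b ^ 2) ≤ ∑ i, (√(ev i ^ 2 + a ^ 2) + (b - a)) :=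
    sum_le_sum fun i _ ↦ Real.sqrt_add_sq_le_sqrt_add_sq_add (sq_nonneg _) ha hab
  rw [sum_add_distrib, sum_const, card_univ, nsmul_eq_mul] at hsum
  linarith

theorem existsUnique_nonneg_mul_eq_sum_sqrt (hk : Fintype.card ι < k) :
    ∃! s : ℝ, 0 ≤ s ∧ k * s = ∑ i, √(ev i ^ 2 + s ^ 2) := by
  set φ : ℝ → ℝ := fun s ↦ k * s - ∑ i, √(ev i ^ 2 + s ^ 2) with hφ
  have hgap : 0 < k - Fintype.card ι := sub_pos.mpr hk
  have hmono : StrictMonoOn φ (Set.Ici 0) := fun a ha b _ hab ↦ by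
    have := sub_mul_le_sub_sum_sqrt ev (k := k) ha hab.le
    nlinarith [mul_pos hgap (sub_pos.mpr hab)]
  have hφ0 : φ 0 ≤ 0 := by
    simp only [hφ, mul_zero, zero_sub, neg_nonpos]
    positivity
  set s₁ := -φ 0 / (k - Fintype.card ι)
  have hs₁ : 0 ≤ s₁ := div_nonneg (neg_nonneg.mpr hφ0) hgap.le
  have hφs₁ : 0 ≤ φ s₁ := by
    have := sub_mul_le_sub_sum_sqrt ev (k := k) le_rfl hs₁
    rw [sub_zero, mul_div_cancel₀ _ hgap.ne'] at this
    linarith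
  obtain ⟨s, hs, hφs⟩ : ∃ s ∈ Set.Icc 0 s₁, φ s = 0 :=
    intermediate_value_Icc hs₁ (by fun_prop) ⟨hφ0, hφs₁⟩
  refine ⟨s, ⟨hs.1, sub_eq_zero.mp hφs⟩, fun t ⟨ht, hφt⟩ ↦ ?_⟩
  exact hmono.injOn ht hs.1 (hφs ▸ sub_eq_zero.mpr hφt)

end ScalarFixedPoint

noncomputable def rootProfile (s t : ℝ) : ℝ := (√(t ^ 2 + s ^ 2) - s) / 2

lemma rootProfile_nonneg (s t : ℝ) : 0 ≤ rootProfile s t := by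
  have : s ≤ √(t ^ 2 + s ^ 2) := Real.le_sqrt_of_sq_le (by nlinarith [sq_nonneg t])
  unfold rootProfile
  linarith

lemma four_mul_rootProfile_add_sq (s t : ℝ) :
    4 * s * rootProfile s t + 4 * rootProfile s t ^ 2 = t ^ 2 := by
  have := Real.sq_sqrt (by positivity : 0 ≤ t ^ 2 + s ^ 2)
  unfold rootProfile
  linear_combination this

@[fun_prop]
lemma continuous_rootProfile (s : ℝ) : Continuous (rootProfile s) := by
  unfold rootProfile
  fun_prop

section FunctionalCalculus

variable {A : Type*} [Ring A] [StarRing A] [TopologicalSpace A] [Algebra ℝ A]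
  [ContinuousFunctionalCalculus ℝ A IsSelfAdjoint]

lemma cfc_rootProfile_smul_add_sq (s : ℝ) {c : A} (hc : IsSelfAdjoint c) :
    (4 * s) • cfc (rootProfile s) c + (4 : ℝ) • cfc (rootProfile s) c ^ 2 = c ^ 2 := by
  rw [← cfc_pow_id (R := ℝ) c 2, ← cfc_pow .., ← cfc_smul .., ← cfc_smul .., ← cfc_add ..]
  exact cfc_congr fun t _ ↦ by
    simpa [smul_eq_mul, mul_assoc] using four_mul_rootProfile_add_sq s t

variable [PartialOrder A] [StarOrderedRing A]

lemma cfc_rootProfile_nonneg (s : ℝ) (c : A) : 0 ≤ cfc (rootProfile s) c :=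
  cfc_nonneg fun t _ ↦ rootProfile_nonneg s t

variable [NonnegSpectrumClass ℝ A] [IsSemitopologicalRing A] [T2Space A]

/-- Completing the square: `(2x + s)² = 4 s x + 4 x² + s²`, and nonnegative square roots are
unique. -/
lemma eq_of_nonneg_of_smul_add_sq_eq {s : ℝ} (hs : 0 ≤ s) {x y : A} (hx : 0 ≤ x) (hy : 0 ≤ y)
    (h : (4 * s) • x + (4 : ℝ) • x ^ 2 = (4 * s) • y + (4 : ℝ) • y ^ 2) : x = y := by
  have hsq (z : A) : ((2 : ℝ) • z + algebraMap ℝ A s) ^ 2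
      = (4 * s) • z + (4 : ℝ) • z ^ 2 + algebraMap ℝ A (s ^ 2) := by
    simp only [sq, Algebra.algebraMap_eq_smul_one, add_mul, mul_add, smul_mul_assoc,
      mul_smul_comm, one_mul, mul_one]
    module
  have hnonneg {z : A} (hz : 0 ≤ z) : 0 ≤ (2 : ℝ) • z + algebraMap ℝ A s := by
    rw [two_smul]
    exact add_nonneg (add_nonneg hz hz) (cfc_const s (0 : A) ▸ cfc_nonneg fun _ _ ↦ hs)
  have := (CFC.sq_eq_sq_iff _ _ (hnonneg hx) (hnonneg hy)).mp (by rw [hsq, hsq, h])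
  exact smul_right_injective A two_ne_zero (add_right_cancel this)

end FunctionalCalculus

namespace Matrix.IsHermitian

variable {n : Type*} [Fintype n] [DecidableEq n]

lemma trace_cfc {𝕜 : Type*} [RCLike 𝕜] {A : Matrix n n 𝕜} (hA : A.IsHermitian) (f : ℝ → ℝ) :
    (cfc f A).trace = ∑ i, (f (hA.eigenvalues i) : 𝕜) := by
  rw [hA.cfc_eq, IsHermitian.cfc, Unitary.conjStarAlgAut_apply, trace_mul_cycle,
    Unitary.coe_star_mul_self, one_mul, trace_diagonal]
  rfl

variable {c : Matrix n n ℝ} (hc : c.IsHermitian)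

lemma trace_cfc_rootProfile_eq_two_mul_iff (s : ℝ) :
    (cfc (rootProfile s) c).trace = 2 * s ↔
      (4 + Fintype.card n) * s = ∑ i, √(hc.eigenvalues i ^ 2 + s ^ 2) := by
  simp only [hc.trace_cfc, RCLike.ofReal_real_eq_id, id, rootProfile, ← sum_div, sum_sub_distrib, sum_const, card_univ,
    nsmul_eq_mul]
  constructor <;> intro h <;> linarith

end Matrix.IsHermitian

/-- The matrix equation `2 tr(x) x + 4 x² = c²` has exactly one symmetric
nonnegative-definite solution, for any real symmetric `d × d` matrix `c`. -/
theorem matrix_equation_unique_psd_solution (d : ℕ)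
    (c : Matrix (Fin d) (Fin d) ℝ) (hc : c.IsSymm) :
    ∃! x : Matrix (Fin d) (Fin d) ℝ,
      x.PosSemidef ∧ (2 * x.trace) • x + (4 : ℝ) • x ^ 2 = c ^ 2 := by
  have hc : c.IsHermitian := Matrix.isHermitian_iff_isSymm.mpr hc
  obtain ⟨s, ⟨hs, hfix⟩, hs_unique⟩ :=
    existsUnique_nonneg_mul_eq_sum_sqrt hc.eigenvalues (k := 4 + Fintype.card (Fin d))
      (by linarith)
  refine ⟨cfc (rootProfile s) c,
    ⟨Matrix.nonneg_iff_posSemidef.mp (cfc_rootProfile_nonneg s c), ?_⟩, ?_⟩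
  · rw [(hc.trace_cfc_rootProfile_eq_two_mul_iff s).mpr hfix, ← mul_assoc]
    norm_num [cfc_rootProfile_smul_add_sq s hc.isSelfAdjoint]
  rintro x ⟨hx, hxeq⟩
  obtain ⟨t, htrace⟩ : ∃ t, x.trace = 2 * t := ⟨x.trace / 2, by ring⟩
  have ht : 0 ≤ t := by linarith [hx.trace_nonneg]
  rw [htrace, ← mul_assoc] at hxeq
  have hxt : x = cfc (rootProfile t) c :=
    eq_of_nonneg_of_smul_add_sq_eq ht hx.nonneg (cfc_rootProfile_nonneg t c)
      (by rw [cfc_rootProfile_smul_add_sq t hc.isSelfAdjoint, ← hxeq]; norm_num)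
  have hts : t = s :=
    hs_unique t ⟨ht, (hc.trace_cfc_rootProfile_eq_two_mul_iff t).mp (hxt ▸ htrace)⟩
  rw [hxt, hts]
end

section
/- Let $c$ be a $d\times d$ real symmetric matrix and let $x(c)$ be the unique symmetric nonnegative-definite solution of $2\,\mathrm{tr}(x)x + 4x^2 = c^2$. Then $x(c)$ is positive-definite if and only if $c^2$ is positive-definite. -/
/-!
Writing `y = 2 tr(x) • 1 + 4 • x`, the equation says `c² = x * y`. Both `x` and `c²` are positive
semidefinite, so each is positive definite iff its determinant is nonzero, and
`det c² = det x * det y`. If `det x ≠ 0` then `x` is positive definite, hence so is `y`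
(as `tr x ≥ 0`), and `det y ≠ 0`.
-/

open scoped Matrix ComplexOrder

namespace Matrix

variable {n : Type*} [DecidableEq n]

lemma PosDef.smul_one_add_smul {x : Matrix n n ℝ} (hx : x.PosDef) {s t : ℝ} (hs : 0 ≤ s)
    (ht : 0 < t) : (s • 1 + t • x).PosDef :=
  PosDef.posSemidef_add (PosSemidef.one.smul hs) (hx.smul ht)

variable [Fintype n]

lemma IsHermitian.posSemidef_sq {R : Type*} [CommRing R] [PartialOrder R] [StarRing R]
    [StarOrderedRing R] {A : Matrix n n R} (hA : A.IsHermitian) : (A ^ 2).PosSemidef := by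
  rw [sq]
  nth_rewrite 1 [← hA.eq]
  exact posSemidef_conjTranspose_mul_self A

lemma PosSemidef.posDef_iff_posDef_mul {𝕜 : Type*} [RCLike 𝕜] {x y : Matrix n n 𝕜}
    (hx : x.PosSemidef) (hxy : (x * y).PosSemidef) (hy : x.PosDef → y.PosDef) :
    x.PosDef ↔ (x * y).PosDef := by
  rw [hxy.posDef_iff_det_ne_zero, det_mul, hx.posDef_iff_det_ne_zero]
  refine ⟨fun hxd ↦ mul_ne_zero hxd ?_, left_ne_zero_of_mul⟩
  have hyd := hy (hx.posDef_iff_det_ne_zero.mpr hxd)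
  exact hyd.posSemidef.posDef_iff_det_ne_zero.mp hyd

end Matrix

/-- If `x` is the (unique) symmetric nonnegative-definite solution of
`2 tr(x) x + 4 x² = c²` for a symmetric `c`, then `x` is positive-definite
iff `c²` is positive-definite. -/
theorem matrix_equation_posdef_iff (d : ℕ)
    (c x : Matrix (Fin d) (Fin d) ℝ) (hc : c.IsSymm)
    (hx : x.PosSemidef) (heq : (2 * x.trace) • x + (4 : ℝ) • x ^ 2 = c ^ 2) :
    x.PosDef ↔ (c ^ 2).PosDef := by
  have hfactor : c ^ 2 = x * ((2 * x.trace) • 1 + (4 : ℝ) • x) := by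
    rw [← heq, mul_add, Matrix.mul_smul, Matrix.mul_smul, mul_one, sq]
  have hc2 : (c ^ 2).PosSemidef := (Matrix.isHermitian_iff_isSymm.mpr hc).posSemidef_sq
  rw [hfactor] at hc2 ⊢
  exact hx.posDef_iff_posDef_mul hc2 fun hxd ↦
    hxd.smul_one_add_smul (mul_nonneg zero_le_two hx.trace_nonneg) four_pos
end

section
/- The map $c \mapsto x(c)$, assigning to each real symmetric $d\times d$ matrix $c$ the unique symmetric nonnegative-definite solution of $2\,\mathrm{tr}(x)x + 4x^2 = c^2$, is continuous on the space of symmetric matrices. -/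
/-!
Taking the trace of `2 tr(x) x + 4 x² = c²` gives `2 tr(x)² + 4 ∑ᵢⱼ xᵢⱼ² = tr(c²)` for
symmetric `x`, so `xᵢⱼ² ≤ tr(c²) / 4` and the solutions are locally bounded in `c`.
Nonnegative-definite solutions form a closed relation between `c` and `x`, so by compactness
every cluster point of `x(c)` as `c → c₀` is a solution for `c₀`; uniqueness identifies it
with `x(c₀)`.
-/

open Filter Topology Set

theorem MapClusterPt.prodMk {α X Y : Type*} [TopologicalSpace X] [TopologicalSpace Y]
    {l : Filter α} {f : α → X} {g : α → Y} {x : X} {y : Y}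
    (hf : Tendsto f l (𝓝 x)) (hg : MapClusterPt y l g) :
    MapClusterPt (x, y) l fun a => (f a, g a) := by
  rw [mapClusterPt_iff_frequently]
  intro s hs
  obtain ⟨u, hu, v, hv, huv⟩ := mem_nhds_prod_iff.1 hs
  exact ((hg.frequently hv).and_eventually (hf hu)).mono fun a ha => huv ⟨ha.2, ha.1⟩

theorem continuousOn_of_isClosed_of_unique {X Y : Type*} [TopologicalSpace X]
    [TopologicalSpace Y] {f : X → Y} {s : Set X} {C : Set (X × Y)} (hC : IsClosed C)
    (hf : ∀ x ∈ s, (x, f x) ∈ C) (huniq : ∀ x ∈ s, ∀ y, (x, y) ∈ C → y = f x)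
    (hbdd : ∀ x ∈ s, ∃ K, IsCompact K ∧ ∀ᶠ x' in 𝓝[s] x, f x' ∈ K) :
    ContinuousOn f s := by
  intro x hx
  obtain ⟨K, hK, hfK⟩ := hbdd x hx
  refine hK.tendsto_nhds_of_unique_mapClusterPt hfK fun y _ hy => huniq x hx y ?_
  exact hC.mem_of_mapClusterPt (MapClusterPt.prodMk (tendsto_id.mono_left nhdsWithin_le_nhds) hy)
    (eventually_mem_nhdsWithin.mono hf)

namespace Matrix

theorem isCompact_setOf_abs_apply_le {m n : Type*} (r : ℝ) :
    IsCompact {M : Matrix m n ℝ | ∀ i j, |M i j| ≤ r} := by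
  have hset : {M : Matrix m n ℝ | ∀ i j, |M i j| ≤ r} =
      univ.pi fun _ => univ.pi fun _ => Icc (-r) r := by
    ext M
    exact ⟨fun h => mem_univ_pi.2 fun i => mem_univ_pi.2 fun j => abs_le.1 (h i j),
      fun h i j => abs_le.2 (mem_univ_pi.1 (mem_univ_pi.1 h i) j)⟩
  rw [hset]
  exact isCompact_univ_pi fun _ => isCompact_univ_pi fun _ => isCompact_Icc

variable {n : Type*} [Fintype n]

theorem isClosed_setOf_posSemidef {R : Type*} [CommRing R] [PartialOrder R] [StarRing R]
    [TopologicalSpace R] [IsTopologicalRing R] [ContinuousStar R] [OrderClosedTopology R] :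
    IsClosed {M : Matrix n n R | M.PosSemidef} := by
  have hset : {M : Matrix n n R | M.PosSemidef} =
      {M | Mᴴ = M} ∩ ⋂ v : n → R, {M | 0 ≤ star v ⬝ᵥ (M *ᵥ v)} := by
    ext M
    simp [posSemidef_iff_dotProduct_mulVec, IsHermitian]
  rw [hset]
  exact (isClosed_eq continuous_id.matrix_conjTranspose continuous_id).inter <|
    isClosed_iInter fun v => isClosed_le continuous_const <|
      continuous_const.dotProduct (continuous_id.matrix_mulVec continuous_const)

theorem IsSymm.sq_apply_le_trace_sq [DecidableEq n] {R : Type*} [CommRing R] [LinearOrder R]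
    [IsStrictOrderedRing R] {x : Matrix n n R} (hx : x.IsSymm) (i j : n) :
    x i j ^ 2 ≤ (x ^ 2).trace := by
  have htrace : (x ^ 2).trace = ∑ i, ∑ j, x i j ^ 2 := by
    simp only [sq, trace, diag_apply, mul_apply, hx.apply]
  rw [htrace]
  calc x i j ^ 2 ≤ ∑ j, x i j ^ 2 :=
        Finset.single_le_sum (fun j _ => sq_nonneg (x i j)) (Finset.mem_univ j)
    _ ≤ ∑ i, ∑ j, x i j ^ 2 :=
        Finset.single_le_sum (f := fun i => ∑ j, x i j ^ 2)
          (fun i _ => Finset.sum_nonneg fun j _ => sq_nonneg (x i j)) (Finset.mem_univ i)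

theorem IsSymm.sq_apply_le_trace_sq_div_four [DecidableEq n] {x c : Matrix n n ℝ}
    (hx : x.IsSymm) (heq : (2 * x.trace) • x + (4 : ℝ) • x ^ 2 = c ^ 2) (i j : n) :
    x i j ^ 2 ≤ (c ^ 2).trace / 4 := by
  have htrace := congrArg trace heq
  simp only [trace_add, trace_smul, smul_eq_mul] at htrace
  nlinarith [hx.sq_apply_le_trace_sq i j, sq_nonneg x.trace]

end Matrix

/-- The map `c ↦ x(c)` assigning to each symmetric matrix `c` the unique
symmetric nonnegative-definite solution of `2 tr(x) x + 4 x² = c²` is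
continuous on the set of symmetric matrices. -/
theorem matrix_equation_solution_continuous (d : ℕ)
    (xfun : Matrix (Fin d) (Fin d) ℝ → Matrix (Fin d) (Fin d) ℝ)
    (hsol : ∀ c : Matrix (Fin d) (Fin d) ℝ, c.IsSymm →
      (xfun c).PosSemidef ∧
        (2 * (xfun c).trace) • xfun c + (4 : ℝ) • (xfun c) ^ 2 = c ^ 2)
    (huniq : ∀ c : Matrix (Fin d) (Fin d) ℝ, c.IsSymm →
      ∀ x : Matrix (Fin d) (Fin d) ℝ, x.PosSemidef →
        (2 * x.trace) • x + (4 : ℝ) • x ^ 2 = c ^ 2 → x = xfun c) :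
    ContinuousOn xfun {c : Matrix (Fin d) (Fin d) ℝ | c.IsSymm} := by
  have hclosed : IsClosed {p : Matrix (Fin d) (Fin d) ℝ × Matrix (Fin d) (Fin d) ℝ |
      p.2.PosSemidef ∧ (2 * p.2.trace) • p.2 + (4 : ℝ) • p.2 ^ 2 = p.1 ^ 2} :=
    (Matrix.isClosed_setOf_posSemidef.preimage continuous_snd).inter
      (isClosed_eq (by fun_prop) (by fun_prop))
  refine continuousOn_of_isClosed_of_unique hclosed hsol
    (fun c hc x hx => huniq c hc x hx.1 hx.2) fun c₀ _ => ?_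
  refine ⟨_, Matrix.isCompact_setOf_abs_apply_le √((c₀ ^ 2).trace / 4 + 1), ?_⟩
  have hnear : ∀ᶠ c in 𝓝 c₀, (c ^ 2).trace / 4 < (c₀ ^ 2).trace / 4 + 1 :=
    ((by fun_prop : Continuous fun c : Matrix (Fin d) (Fin d) ℝ => (c ^ 2).trace / 4).tendsto
      c₀).eventually_lt_const (lt_add_one _)
  filter_upwards [eventually_nhdsWithin_of_eventually_nhds hnear, self_mem_nhdsWithin]
    with c hc hsymm i j
  obtain ⟨hpsd, heq⟩ := hsol c hsymm
  exact Real.abs_le_sqrt <|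
    ((Matrix.isHermitian_iff_isSymm.1 hpsd.1).sq_apply_le_trace_sq_div_four heq i j).trans hc.le
end

section
/- For every $\lambda \in \mathbb{R}^d$, the unique nonnegative root $y_\lambda$ of $y \mapsto (4+d)y - \sum_{i=1}^d \sqrt{y^2 + 4\lambda_i^2}$ satisfies $0 \le y_\lambda \le \frac{d\,|\lambda|}{\sqrt{4+2d}}$, where $|\lambda|$ is the Euclidean norm of $\lambda$. -/
open Finset Real

/-- Cauchy–Schwarz on `(4 + n) y = ∑ √(y² + 4 λᵢ²)` gives `(4 + n)² y² ≤ n (n y² + 4 ∑ λᵢ²)`,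
in which the `n² y²` terms cancel. -/
theorem add_two_card_mul_sq_le_of_eq_sum_sqrt {ι : Type*} (s : Finset ι) (lam : ι → ℝ) (y : ℝ)
    (hroot : (4 + #s) * y = ∑ i ∈ s, √(y ^ 2 + 4 * lam i ^ 2)) :
    (4 + 2 * #s) * y ^ 2 ≤ #s * ∑ i ∈ s, lam i ^ 2 := by
  have hCS : ((4 + #s) * y) ^ 2 ≤ #s * (#s * y ^ 2 + 4 * ∑ i ∈ s, lam i ^ 2) :=
    calc ((4 + #s) * y) ^ 2 = (∑ i ∈ s, √(y ^ 2 + 4 * lam i ^ 2)) ^ 2 := by rw [hroot]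
      _ ≤ #s * ∑ i ∈ s, √(y ^ 2 + 4 * lam i ^ 2) ^ 2 := sq_sum_le_card_mul_sum_sq
      _ = #s * (#s * y ^ 2 + 4 * ∑ i ∈ s, lam i ^ 2) := by
        simp only [fun i => sq_sqrt (by positivity : 0 ≤ y ^ 2 + 4 * lam i ^ 2), sum_add_distrib,
          sum_const, nsmul_eq_mul, ← mul_sum]
  linear_combination hCS / 4

/-- The unique nonnegative root `y_λ` of `y ↦ (4+d) y - ∑ i, √(y² + 4 λᵢ²)`
satisfies `0 ≤ y_λ ≤ d |λ| / √(4 + 2d)`. -/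
theorem nonneg_root_bound (d : ℕ) (lam : Fin d → ℝ) (y : ℝ)
    (hy : 0 ≤ y)
    (hroot : (4 + (d : ℝ)) * y - ∑ i : Fin d, Real.sqrt (y ^ 2 + 4 * lam i ^ 2) = 0) :
    0 ≤ y ∧ y ≤ (d : ℝ) * Real.sqrt (∑ i : Fin d, lam i ^ 2) / Real.sqrt (4 + 2 * (d : ℝ)) := by
  refine ⟨hy, ?_⟩
  have hsum : (4 + (d : ℝ)) * y = ∑ i, √(y ^ 2 + 4 * lam i ^ 2) := by linarith
  have hsq : (4 + 2 * (d : ℝ)) * y ^ 2 ≤ d * ∑ i, lam i ^ 2 := by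
    simpa using add_two_card_mul_sq_le_of_eq_sum_sqrt univ lam y (by simpa using hsum)
  -- the sharper bound `√d |λ| / √(4 + 2d)` is weakened using `d ≤ d²`, valid as `d` is a natural
  have hd : (d : ℝ) ≤ (d : ℝ) ^ 2 := by exact_mod_cast Nat.le_self_pow two_ne_zero d
  have hS : 0 ≤ ∑ i, lam i ^ 2 := by positivity
  rw [le_div_iff₀ (by positivity)]
  refine (pow_le_pow_iff_left₀ (by positivity) (by positivity) two_ne_zero).1 ?_
  rw [mul_pow, mul_pow, sq_sqrt (by positivity), sq_sqrt hS]
  nlinarith [mul_le_mul_of_nonneg_right hd hS]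
end

section
/- Let $c$ be a real symmetric $d \times d$ matrix with eigenvalues $\lambda_1(c),\dots,\lambda_d(c)$, let $y_{\lambda(c)}$ be the unique nonnegative root of $y \mapsto (4+d)y - \sum_{i=1}^d \sqrt{y^2 + 4\lambda_i(c)^2}$, and define $x(c) = -\frac{y_{\lambda(c)}}{4} I_d + \frac{1}{2}\left(\frac{y_{\lambda(c)}^2}{4} I_d + c^2\right)^{1/2}$, where $(\cdot)^{1/2}$ denotes the unique symmetric nonnegative-definite square root. Then $x(c)$ is symmetric nonnegative-definite and satisfies $2\,\mathrm{tr}(x(c))\,x(c) + 4x(c)^2 = c^2$. -/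
/-!
Let `g y t = -y/4 + √(y²/4 + t²)/2` (`scalarSolution`). The square root of `y²/4 + c²` is the
image of `c` under `t ↦ √(y²/4 + t²)`, so `x(c)` is `g y` applied to `c` through the continuous
functional calculus. Pointwise `g y t ≥ 0` and `2 y g + 4 g² = t²`, and the root condition on `y`
says precisely that `tr x(c) = ∑ᵢ g y (λᵢ(c)) = y`; the matrix equation is therefore the scalar
identity transported by the functional calculus.
-/

section
open scoped ComplexOrder

/-- The square root of a positive semidefinite matrix, as defined in the older Mathlib
(`Matrix.PosSemidef.sqrt`, removed since). -/
noncomputable def Matrix.PosSemidef.sqrt {n 𝕜 : Type*} [Fintype n] [RCLike 𝕜] [DecidableEq n]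
    {A : Matrix n n 𝕜} (hA : A.PosSemidef) : Matrix n n 𝕜 :=
  hA.1.eigenvectorUnitary.1 * Matrix.diagonal ((↑) ∘ (√·) ∘ hA.1.eigenvalues) *
  (star hA.1.eigenvectorUnitary : Matrix n n 𝕜)

end

namespace CFC

variable {A : Type*} [PartialOrder A] [Ring A] [StarRing A] [TopologicalSpace A]
  [StarOrderedRing A] [Algebra ℝ A] [ContinuousFunctionalCalculus ℝ A IsSelfAdjoint]
  [NonnegSpectrumClass ℝ A] [IsSemitopologicalRing A] [T2Space A]

theorem sqrt_cfc {a : A} {f : ℝ → ℝ} (hf : ContinuousOn f (spectrum ℝ a))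
    (hf_nonneg : ∀ t ∈ spectrum ℝ a, 0 ≤ f t) :
    sqrt (cfc f a) = cfc (fun t => √(f t)) a := by
  refine sqrt_unique ?_ (cfc_nonneg fun t _ => Real.sqrt_nonneg _)
  have hsqrt : ContinuousOn (fun t => √(f t)) (spectrum ℝ a) := hf.sqrt
  rw [← cfc_mul _ _ a hsqrt hsqrt]
  exact cfc_congr fun t ht => Real.mul_self_sqrt (hf_nonneg t ht)

end CFC

namespace Matrix

open scoped ComplexOrder MatrixOrder

variable {n 𝕜 : Type*} [Fintype n] [DecidableEq n] [RCLike 𝕜]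

theorem PosSemidef.sqrt_eq_cfcSqrt {A : Matrix n n 𝕜} (hA : A.PosSemidef) :
    hA.sqrt = CFC.sqrt A := by
  rw [CFC.sqrt_eq_real_sqrt A hA.nonneg, cfcₙ_eq_cfc (f := Real.sqrt), hA.1.cfc_eq]
  simp [IsHermitian.cfc, PosSemidef.sqrt, Unitary.conjStarAlgAut_apply]

theorem IsHermitian.trace_cfc_s8 {A : Matrix n n 𝕜} (hA : A.IsHermitian) (f : ℝ → ℝ) :
    (cfc f A).trace = ∑ i, (f (hA.eigenvalues i) : 𝕜) := by
  rw [hA.cfc_eq, IsHermitian.cfc, Unitary.conjStarAlgAut_apply, trace_mul_cycle,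
    Unitary.coe_star_mul_self, one_mul, trace_diagonal]
  rfl

theorem posSemidef_cfc {A : Matrix n n 𝕜} {f : ℝ → ℝ} (hf : ∀ t ∈ spectrum ℝ A, 0 ≤ f t) :
    (cfc f A).PosSemidef :=
  nonneg_iff_posSemidef.mp (cfc_nonneg hf)

end Matrix

noncomputable def scalarSolution (y t : ℝ) : ℝ := -(y / 4) + 2⁻¹ * √(y ^ 2 / 4 + t ^ 2)

@[fun_prop]
theorem continuous_scalarSolution (y : ℝ) : Continuous (scalarSolution y) := by
  unfold scalarSolution
  fun_prop

theorem scalarSolution_nonneg (y t : ℝ) : 0 ≤ scalarSolution y t := by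
  have : y / 2 ≤ √(y ^ 2 / 4 + t ^ 2) := Real.le_sqrt_of_sq_le (by nlinarith [sq_nonneg t])
  unfold scalarSolution
  linarith

theorem scalarSolution_equation (y t : ℝ) :
    2 * y * scalarSolution y t + 4 * scalarSolution y t ^ 2 = t ^ 2 := by
  have h := Real.sq_sqrt (by positivity : 0 ≤ y ^ 2 / 4 + t ^ 2)
  unfold scalarSolution
  linear_combination h

theorem sum_scalarSolution_eq {ι : Type*} [Fintype ι] {μ : ι → ℝ} {y : ℝ}
    (hroot : (4 + Fintype.card ι : ℝ) * y - ∑ i, √(y ^ 2 + 4 * μ i ^ 2) = 0) :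
    ∑ i, scalarSolution y (μ i) = y := by
  have hhalf : ∀ t : ℝ, √(y ^ 2 + 4 * t ^ 2) = 2 * √(y ^ 2 / 4 + t ^ 2) := fun t => by
    rw [show y ^ 2 + 4 * t ^ 2 = 2 ^ 2 * (y ^ 2 / 4 + t ^ 2) by ring,
      Real.sqrt_mul (by positivity), Real.sqrt_sq zero_le_two]
  simp only [hhalf, ← Finset.mul_sum] at hroot
  simp only [scalarSolution, Finset.sum_add_distrib, ← Finset.mul_sum, Finset.sum_const,
    Finset.card_univ, nsmul_eq_mul]
  linarith

open scoped MatrixOrder in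
theorem Matrix.IsHermitian.cfc_scalarSolution {n : Type*} [Fintype n] [DecidableEq n]
    {c : Matrix n n ℝ} (hc : c.IsHermitian) {y : ℝ}
    (hA : ((y ^ 2 / 4) • (1 : Matrix n n ℝ) + c ^ 2).PosSemidef) :
    cfc (scalarSolution y) c = -(y / 4) • (1 : Matrix n n ℝ) + (2⁻¹ : ℝ) • hA.sqrt := by
  have hsq : (y ^ 2 / 4) • (1 : Matrix n n ℝ) + c ^ 2 = cfc (fun t => y ^ 2 / 4 + t ^ 2) c := by
    rw [cfc_const_add .., cfc_pow_id .., Algebra.algebraMap_eq_smul_one]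
  have hsqrt : hA.sqrt = cfc (fun t => √(y ^ 2 / 4 + t ^ 2)) c := by
    rw [hA.sqrt_eq_cfcSqrt, hsq, CFC.sqrt_cfc (by fun_prop) fun t _ => by positivity]
  unfold scalarSolution
  rw [hsqrt, cfc_const_add .., cfc_const_mul .., Algebra.algebraMap_eq_smul_one]

theorem explicit_solution_solves_matrix_equation_general (d : ℕ)
    (c : Matrix (Fin d) (Fin d) ℝ) (hc : c.IsHermitian) (y : ℝ)
    (hroot : (4 + (d : ℝ)) * y
      - ∑ i : Fin d, Real.sqrt (y ^ 2 + 4 * hc.eigenvalues i ^ 2) = 0)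
    (hA : (Matrix.PosSemidef ((y ^ 2 / 4) • (1 : Matrix (Fin d) (Fin d) ℝ) + c ^ 2))) :
    (Matrix.PosSemidef (-(y / 4) • (1 : Matrix (Fin d) (Fin d) ℝ) + (2⁻¹ : ℝ) • hA.sqrt)) ∧
      (2 * (-(y / 4) • (1 : Matrix (Fin d) (Fin d) ℝ) + (2⁻¹ : ℝ) • hA.sqrt).trace) •
          (-(y / 4) • (1 : Matrix (Fin d) (Fin d) ℝ) + (2⁻¹ : ℝ) • hA.sqrt)
        + (4 : ℝ) • (-(y / 4) • (1 : Matrix (Fin d) (Fin d) ℝ) + (2⁻¹ : ℝ) • hA.sqrt) ^ 2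
      = c ^ 2 := by
  rw [← hc.cfc_scalarSolution hA]
  refine ⟨Matrix.posSemidef_cfc fun t _ => scalarSolution_nonneg y t, ?_⟩
  have htrace : (cfc (scalarSolution y) c).trace = y := by
    rw [hc.trace_cfc_s8]
    exact sum_scalarSolution_eq (by simpa using hroot)
  rw [htrace, ← cfc_smul .., ← cfc_pow .., ← cfc_smul .., ← cfc_add ..,
    ← cfc_pow_id (R := ℝ) c 2]
  exact cfc_congr fun t _ => by simpa [mul_assoc] using scalarSolution_equation y t

/-- Explicit solution of `2 tr(x) x + 4 x² = c²`: with `y` the unique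
nonnegative root of `y ↦ (4+d) y - ∑ i √(y² + 4 λᵢ(c)²)` (`λᵢ(c)` the
eigenvalues of `c`), the matrix `x(c) = -(y/4) I + (1/2)(y²/4 I + c²)^{1/2}`
is symmetric nonnegative-definite and solves the equation. -/
theorem explicit_solution_solves_matrix_equation (d : ℕ)
    (c : Matrix (Fin d) (Fin d) ℝ) (hc : c.IsHermitian) (y : ℝ) (hy : 0 ≤ y)
    (hroot : (4 + (d : ℝ)) * y
      - ∑ i : Fin d, Real.sqrt (y ^ 2 + 4 * hc.eigenvalues i ^ 2) = 0)
    (hA : (Matrix.PosSemidef ((y ^ 2 / 4) • (1 : Matrix (Fin d) (Fin d) ℝ) + c ^ 2))) :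
    (Matrix.PosSemidef (-(y / 4) • (1 : Matrix (Fin d) (Fin d) ℝ) + (2⁻¹ : ℝ) • hA.sqrt)) ∧
      (2 * (-(y / 4) • (1 : Matrix (Fin d) (Fin d) ℝ) + (2⁻¹ : ℝ) • hA.sqrt).trace) •
          (-(y / 4) • (1 : Matrix (Fin d) (Fin d) ℝ) + (2⁻¹ : ℝ) • hA.sqrt)
        + (4 : ℝ) • (-(y / 4) • (1 : Matrix (Fin d) (Fin d) ℝ) + (2⁻¹ : ℝ) • hA.sqrt) ^ 2
      = c ^ 2 :=
  explicit_solution_solves_matrix_equation_general d c hc y hroot hA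
end

section
/- Let $(U^n)_{n \ge 0}$ and $(V^n)_{n \ge 0}$ be sequences of nonnegative continuous adapted processes on $[0,T]$ vanishing at $t = 0$. Assume: (i) almost surely each $V^n$ is nondecreasing in $t$; (ii) the series $\sum_{n \ge 0} V^n_T$ converges almost surely; (iii) there is a constant $c \ge 0$ such that for every $n, k \in \mathbb{N}$ and $t \in [0,T]$, $\mathbb{E}[U^n_{t \wedge \theta_k}] \le c\,\mathbb{E}[V^n_{t \wedge \theta_k}]$, where $\theta_k = \inf\{s \in [0,T] : \sum_{n \ge 0} V^n_s \ge k\}$. Then for every $t \in [0,T]$, the series $\sum_{n \ge 0} U^n_t$ converges almost surely, and in particular $U^n_t \to 0$ almost surely. -/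
open MeasureTheory Set
open scoped ENNReal

/-! Localize at the events `A_k = {∑ₙ Vⁿ_T < k}`, which exhaust `Ω` almost surely. On `A_k` the
hitting time `θ_k` is not reached before `T`, so `Uⁿ_t = Uⁿ_{t∧θ_k}` there, while continuity of
`∑ₙ Vⁿ` up to `θ_k` gives `∑ₙ Vⁿ_{t∧θ_k} ≤ k`. The domination then yields
`∑ₙ E[Uⁿ_t; A_k] ≤ c k < ∞`, hence `∑ₙ Uⁿ_t < ∞` a.s. on every `A_k`. -/

-- `inf ∅ = +∞` is replaced by `T`, which changes nothing after taking `t ∧ ·` with `t ≤ T`.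
noncomputable def cappedHittingTime (S : ℝ → ℝ) (T k : ℝ) : ℝ :=
  sInf ({s ∈ Icc 0 T | k ≤ S s} ∪ {T})

section CappedHittingTime

variable {S f : ℝ → ℝ} {T k s : ℝ}

lemma bddBelow_sep_Icc_union_singleton (hT : 0 ≤ T) :
    BddBelow ({s ∈ Icc 0 T | k ≤ S s} ∪ {T}) :=
  ⟨0, by rintro s (⟨⟨hs, -⟩, -⟩ | rfl) <;> assumption⟩

lemma cappedHittingTime_nonneg (hT : 0 ≤ T) : 0 ≤ cappedHittingTime S T k :=
  le_csInf ⟨T, Or.inr rfl⟩ (by rintro s (⟨⟨hs, -⟩, -⟩ | rfl) <;> assumption)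

lemma lt_of_lt_cappedHittingTime (hs : s ∈ Icc 0 T) (hsθ : s < cappedHittingTime S T k) :
    S s < k :=
  not_le.1 fun hks =>
    (csInf_le (bddBelow_sep_Icc_union_singleton (hs.1.trans hs.2)) (Or.inl ⟨hs, hks⟩)).not_gt hsθ

lemma cappedHittingTime_eq_right (h : ∀ s ∈ Icc 0 T, S s < k) : cappedHittingTime S T k = T := by
  have hempty : {s ∈ Icc 0 T | k ≤ S s} = ∅ :=
    eq_empty_of_forall_notMem fun s ⟨hs, hks⟩ => (h s hs).not_ge hks
  rw [cappedHittingTime, hempty, empty_union, csInf_singleton]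

/-- At `θ` itself, `f θ` is a limit of values `< k` from the left. -/
lemma le_of_le_cappedHittingTime (hf : ContinuousOn f (Icc 0 T)) (hf0 : f 0 ≤ k)
    (hfS : ∀ s ∈ Icc 0 T, f s ≤ S s) (hs : s ∈ Icc 0 T) (hsθ : s ≤ cappedHittingTime S T k) :
    f s ≤ k := by
  rcases hsθ.lt_or_eq with hlt | rfl
  · exact (hfS s hs).trans (lt_of_lt_cappedHittingTime hs hlt).le
  rcases hs.1.eq_or_lt with h0 | hpos
  · rwa [← h0]
  have hsub : Ico 0 (cappedHittingTime S T k) ⊆ Icc 0 T := fun u hu => ⟨hu.1, hu.2.le.trans hs.2⟩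
  refine ContinuousWithinAt.closure_le ?_ ((hf _ hs).mono hsub) continuousWithinAt_const
    fun u hu => (hfS u (hsub hu)).trans (lt_of_lt_cappedHittingTime (hsub hu) hu.2).le
  rw [closure_Ico hpos.ne]
  exact right_mem_Icc.2 hpos.le

end CappedHittingTime

section MonotoneFamily

variable {v : ℕ → ℝ → ℝ} {T s : ℝ}

lemma summable_of_monotoneOn (hpos : ∀ n s, 0 ≤ v n s) (hmono : ∀ n, MonotoneOn (v n) (Icc 0 T))
    (hsum : Summable fun n => v n T) (hs : s ∈ Icc 0 T) : Summable fun n => v n s :=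
  hsum.of_nonneg_of_le (hpos · s) fun n => hmono n hs (right_mem_Icc.2 (hs.1.trans hs.2)) hs.2

lemma tsum_le_tsum_of_monotoneOn (hpos : ∀ n s, 0 ≤ v n s) (hmono : ∀ n, MonotoneOn (v n) (Icc 0 T))
    (hsum : Summable fun n => v n T) (hs : s ∈ Icc 0 T) : ∑' n, v n s ≤ ∑' n, v n T :=
  (summable_of_monotoneOn hpos hmono hsum hs).tsum_le_tsum
    (fun n => hmono n hs (right_mem_Icc.2 (hs.1.trans hs.2)) hs.2) hsum

lemma cappedHittingTime_tsum_eq_right (hpos : ∀ n s, 0 ≤ v n s)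
    (hmono : ∀ n, MonotoneOn (v n) (Icc 0 T)) (hsum : Summable fun n => v n T) {k : ℝ}
    (hk : ∑' n, v n T < k) : cappedHittingTime (fun s => ∑' n, v n s) T k = T :=
  cappedHittingTime_eq_right fun _ hs => (tsum_le_tsum_of_monotoneOn hpos hmono hsum hs).trans_lt hk

lemma tsum_ofReal_le_of_le_cappedHittingTime (hcont : ∀ n, ContinuousOn (v n) (Icc 0 T))
    (hzero : ∀ n, v n 0 = 0) (hpos : ∀ n s, 0 ≤ v n s) (hmono : ∀ n, MonotoneOn (v n) (Icc 0 T))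
    (hsum : Summable fun n => v n T) {k : ℝ} (hk : 0 ≤ k) (hs : s ∈ Icc 0 T)
    (hsθ : s ≤ cappedHittingTime (fun s => ∑' n, v n s) T k) :
    ∑' n, ENNReal.ofReal (v n s) ≤ ENNReal.ofReal k := by
  rw [← ENNReal.ofReal_tsum_of_nonneg (hpos · s) (summable_of_monotoneOn hpos hmono hsum hs)]
  refine ENNReal.ofReal_le_ofReal (Real.tsum_le_of_sum_le (hpos · s) fun F => ?_)
  refine le_of_le_cappedHittingTime (continuousOn_finsetSum F fun n _ => hcont n)
    (by simpa only [hzero, Finset.sum_const_zero] using hk) (fun u hu => ?_) hs hsθ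
  exact (summable_of_monotoneOn hpos hmono hsum hu).sum_le_tsum F fun n _ => hpos n u

end MonotoneFamily

-- Unlike `lintegral_tsum`, this needs no measurability, which the stopped values `Vⁿ_{t∧θ_k}`
-- are not known to have.
lemma tsum_lintegral_le_lintegral_tsum {α ι : Type*} [MeasurableSpace α] (μ : Measure α)
    (f : ι → α → ℝ≥0∞) : ∑' n, ∫⁻ a, f n a ∂μ ≤ ∫⁻ a, ∑' n, f n a ∂μ := by
  classical
  have hsuper : ∀ F : Finset ι, ∑ n ∈ F, ∫⁻ a, f n a ∂μ ≤ ∫⁻ a, ∑ n ∈ F, f n a ∂μ := by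
    intro F
    induction F using Finset.induction_on with
    | empty => simp
    | insert n F hn ih =>
      simp only [Finset.sum_insert hn]
      exact (add_le_add_right ih _).trans (le_lintegral_add _ _)
  rw [ENNReal.tsum_eq_iSup_sum]
  exact iSup_le fun F => (hsuper F).trans (lintegral_mono fun a => ENNReal.sum_le_tsum F)

lemma ae_tsum_ne_top_of_tsum_setLIntegral_ne_top {α : Type*} [MeasurableSpace α] {μ : Measure α}
    {ι κ : Type*} [Countable ι] [Countable κ] {f : ι → α → ℝ≥0∞} (hf : ∀ i, AEMeasurable (f i) μ)
    {A : κ → Set α} (hA : ∀ k, MeasurableSet (A k)) (hcover : ∀ᵐ a ∂μ, ∃ k, a ∈ A k)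
    (hfin : ∀ k, ∑' i, ∫⁻ a in A k, f i a ∂μ ≠ ∞) : ∀ᵐ a ∂μ, ∑' i, f i a ≠ ∞ := by
  have hloc : ∀ k, ∀ᵐ a ∂μ, a ∈ A k → ∑' i, f i a ≠ ∞ := fun k =>
    (ae_restrict_iff' (hA k)).1 <| (ae_lt_top' (AEMeasurable.tsum fun i => (hf i).restrict)
      ((lintegral_tsum fun i => (hf i).restrict).trans_ne (hfin k))).mono fun _ h => h.ne
  filter_upwards [hcover, ae_all_iff.2 hloc] with a ⟨k, hk⟩ h using h k hk

section Processes

variable {Ω : Type*} {m0 : MeasurableSpace Ω} {P : Measure Ω} {T t : ℝ} {V : ℕ → ℝ → Ω → ℝ}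

lemma ae_min_cappedHittingTime_eq (hVpos : ∀ n t ω, 0 ≤ V n t ω)
    (hVmono : ∀ᵐ ω ∂P, ∀ n, MonotoneOn (fun t => V n t ω) (Icc 0 T))
    (hVsum : ∀ᵐ ω ∂P, Summable (fun n => V n T ω)) (ht : t ∈ Icc 0 T) (k : ℕ) :
    ∀ᵐ ω ∂P, ∑' n, ENNReal.ofReal (V n T ω) < k →
      min t (cappedHittingTime (fun s => ∑' n, V n s ω) T k) = t := by
  filter_upwards [hVmono, hVsum] with ω hmono hsum hk
  rw [← ENNReal.ofReal_tsum_of_nonneg (hVpos · T ω) hsum, ← ENNReal.ofReal_natCast,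
    ENNReal.ofReal_lt_ofReal_iff_of_nonneg (tsum_nonneg (hVpos · T ω))] at hk
  rw [cappedHittingTime_tsum_eq_right (hVpos · · ω) hmono hsum hk, min_eq_left ht.2]

lemma tsum_lintegral_ofReal_stopped_le [IsProbabilityMeasure P]
    (hVcont : ∀ n ω, ContinuousOn (fun t => V n t ω) (Icc 0 T)) (hVpos : ∀ n t ω, 0 ≤ V n t ω)
    (hV0 : ∀ n ω, V n 0 ω = 0) (hVmono : ∀ᵐ ω ∂P, ∀ n, MonotoneOn (fun t => V n t ω) (Icc 0 T))
    (hVsum : ∀ᵐ ω ∂P, Summable (fun n => V n T ω)) (ht : t ∈ Icc 0 T) (k : ℕ) :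
    ∑' n, ∫⁻ ω, ENNReal.ofReal
      (V n (min t (cappedHittingTime (fun s => ∑' m, V m s ω) T k)) ω) ∂P ≤ k := by
  have hT : 0 ≤ T := ht.1.trans ht.2
  refine (tsum_lintegral_le_lintegral_tsum P _).trans ?_
  calc _ ≤ ∫⁻ _, (k : ℝ≥0∞) ∂P := lintegral_mono_ae <| by
        filter_upwards [hVmono, hVsum] with ω hmono hsum
        rw [← ENNReal.ofReal_natCast]
        exact tsum_ofReal_le_of_le_cappedHittingTime (hVcont · ω) (hV0 · ω) (hVpos · · ω) hmono
          hsum k.cast_nonneg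
          ⟨le_min ht.1 (cappedHittingTime_nonneg hT), (min_le_left _ _).trans ht.2⟩
          (min_le_right _ _)
    _ = k := by simp

lemma tsum_setLIntegral_le_of_stopped {U : ℕ → ℝ → Ω → ℝ} {τ : Ω → ℝ} {A : Set Ω}
    (hA : MeasurableSet A) (hτ : ∀ᵐ ω ∂P, ω ∈ A → τ ω = t) {c : ℝ}
    (hdom : ∀ n, ∫⁻ ω, ENNReal.ofReal (U n (τ ω) ω) ∂P
      ≤ ENNReal.ofReal c * ∫⁻ ω, ENNReal.ofReal (V n (τ ω) ω) ∂P) :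
    ∑' n, ∫⁻ ω in A, ENNReal.ofReal (U n t ω) ∂P
      ≤ ENNReal.ofReal c * ∑' n, ∫⁻ ω, ENNReal.ofReal (V n (τ ω) ω) ∂P := by
  rw [← ENNReal.tsum_mul_left]
  refine ENNReal.tsum_le_tsum fun n => ?_
  calc ∫⁻ ω in A, ENNReal.ofReal (U n t ω) ∂P
      = ∫⁻ ω in A, ENNReal.ofReal (U n (τ ω) ω) ∂P :=
        setLIntegral_congr_fun_ae hA (hτ.mono fun ω h hω => by rw [h hω])
    _ ≤ ∫⁻ ω, ENNReal.ofReal (U n (τ ω) ω) ∂P := setLIntegral_le_lintegral _ _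
    _ ≤ _ := hdom n

end Processes

theorem as_convergence_series_from_domination_continuous_adapted_general
    {Ω : Type*} {m0 : MeasurableSpace Ω} (P : Measure Ω) [IsProbabilityMeasure P]
    (ℱ : Filtration ℝ m0) (T : ℝ)
    (U V : ℕ → ℝ → Ω → ℝ)
    (hUadapted : ∀ n, Adapted ℱ (fun t => U n t))
    (hVadapted : ∀ n, Adapted ℱ (fun t => V n t))
    (hVcont : ∀ n ω, ContinuousOn (fun t => V n t ω) (Icc 0 T))
    (hUpos : ∀ n t ω, 0 ≤ U n t ω) (hVpos : ∀ n t ω, 0 ≤ V n t ω)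
    (hV0 : ∀ n ω, V n 0 ω = 0)
    -- (i) each `Vⁿ` is nondecreasing in time, a.s.
    (hVmono : ∀ᵐ ω ∂P, ∀ n, MonotoneOn (fun t => V n t ω) (Icc 0 T))
    -- (ii) the series `∑ₙ Vⁿ_T` converges a.s.
    (hVsum : ∀ᵐ ω ∂P, Summable (fun n => V n T ω))
    -- (iii) domination at the localized times `t ∧ θ_k`
    (c : ℝ)
    (hdom : ∀ n k : ℕ, ∀ t ∈ Icc (0 : ℝ) T,
      (∫⁻ ω, ENNReal.ofReal
          (U n (min t (sInf ({s ∈ Icc (0 : ℝ) T | (k : ℝ) ≤ ∑' m, V m s ω} ∪ {T}))) ω) ∂P)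
        ≤ ENNReal.ofReal c *
          ∫⁻ ω, ENNReal.ofReal
            (V n (min t (sInf ({s ∈ Icc (0 : ℝ) T | (k : ℝ) ≤ ∑' m, V m s ω} ∪ {T}))) ω) ∂P) :
    ∀ t ∈ Icc (0 : ℝ) T, ∀ᵐ ω ∂P, Summable (fun n => U n t ω) := by
  intro t ht
  set A : ℕ → Set Ω := fun k => {ω | ∑' n, ENNReal.ofReal (V n T ω) < k}
  have hA : ∀ k, MeasurableSet (A k) := fun k =>
    measurableSet_lt (Measurable.tsum fun n =>
      ((hVadapted n T).mono (ℱ.le T) le_rfl).ennreal_ofReal) measurable_const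
  have hcover : ∀ᵐ ω ∂P, ∃ k, ω ∈ A k := by
    filter_upwards [hVsum] with ω hsum using ENNReal.exists_nat_gt hsum.tsum_ofReal_ne_top
  have hfin : ∀ k, ∑' n, ∫⁻ ω in A k, ENNReal.ofReal (U n t ω) ∂P ≠ ∞ := fun k =>
    ne_top_of_le_ne_top (ENNReal.mul_ne_top ENNReal.ofReal_ne_top (ENNReal.natCast_ne_top k)) <|
      (tsum_setLIntegral_le_of_stopped (hA k)
        (ae_min_cappedHittingTime_eq hVpos hVmono hVsum ht k) fun n => hdom n k t ht).trans <|
      mul_le_mul_right (tsum_lintegral_ofReal_stopped_le hVcont hVpos hV0 hVmono hVsum ht k) _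
  filter_upwards [ae_tsum_ne_top_of_tsum_setLIntegral_ne_top
    (fun n => ((hUadapted n t).mono (ℱ.le t) le_rfl).ennreal_ofReal.aemeasurable)
    hA hcover hfin] with ω hω
  exact (ENNReal.summable_toReal hω).congr fun n => ENNReal.toReal_ofReal (hUpos n t ω)

/-- Lemma 2.2 of Gobet–Landon: for sequences `(Uⁿ), (Vⁿ)` of nonnegative
continuous adapted processes vanishing at `0`, with each `Vⁿ` nondecreasing,
`∑ₙ Vⁿ_T < ∞` a.s., and a domination `E[Uⁿ_{t∧θ_k}] ≤ c E[Vⁿ_{t∧θ_k}]` at the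
stopping times `θ_k = inf{s ∈ [0,T] : ∑ₙ Vⁿ_s ≥ k}` (`inf ∅ = +∞`, encoded by
adjoining `T`, which leaves `t ∧ θ_k` unchanged for `t ∈ [0,T]`), the series
`∑ₙ Uⁿ_t` converges a.s. for every `t ∈ [0,T]`. -/
theorem as_convergence_series_from_domination_continuous_adapted
    {Ω : Type*} {m0 : MeasurableSpace Ω} (P : Measure Ω) [IsProbabilityMeasure P]
    (ℱ : Filtration ℝ m0) (T : ℝ) (hT : 0 < T)
    (U V : ℕ → ℝ → Ω → ℝ)
    (hUadapted : ∀ n, Adapted ℱ (fun t => U n t))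
    (hVadapted : ∀ n, Adapted ℱ (fun t => V n t))
    (hUcont : ∀ n ω, ContinuousOn (fun t => U n t ω) (Icc 0 T))
    (hVcont : ∀ n ω, ContinuousOn (fun t => V n t ω) (Icc 0 T))
    (hUpos : ∀ n t ω, 0 ≤ U n t ω) (hVpos : ∀ n t ω, 0 ≤ V n t ω)
    (hU0 : ∀ n ω, U n 0 ω = 0) (hV0 : ∀ n ω, V n 0 ω = 0)
    -- (i) each `Vⁿ` is nondecreasing in time, a.s.
    (hVmono : ∀ᵐ ω ∂P, ∀ n, MonotoneOn (fun t => V n t ω) (Icc 0 T))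
    -- (ii) the series `∑ₙ Vⁿ_T` converges a.s.
    (hVsum : ∀ᵐ ω ∂P, Summable (fun n => V n T ω))
    -- (iii) domination at the localized times `t ∧ θ_k`
    (c : ℝ) (hc : 0 ≤ c)
    (hdom : ∀ n k : ℕ, ∀ t ∈ Icc (0 : ℝ) T,
      (∫⁻ ω, ENNReal.ofReal
          (U n (min t (sInf ({s ∈ Icc (0 : ℝ) T | (k : ℝ) ≤ ∑' m, V m s ω} ∪ {T}))) ω) ∂P)
        ≤ ENNReal.ofReal c *
          ∫⁻ ω, ENNReal.ofReal
            (V n (min t (sInf ({s ∈ Icc (0 : ℝ) T | (k : ℝ) ≤ ∑' m, V m s ω} ∪ {T}))) ω) ∂P) :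
    ∀ t ∈ Icc (0 : ℝ) T, ∀ᵐ ω ∂P, Summable (fun n => U n t ω) :=
  as_convergence_series_from_domination_continuous_adapted_general P ℱ T U V hUadapted hVadapted
    hVcont hUpos hVpos hV0 hVmono hVsum c hdom
end
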